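/- Let m ≥ 2, let Γ be a subgroup of Perm(Fin m), and let O_1, …, O_t be the orbits of the natural action of the commutator subgroup ⁅Γ,Γ⁆ on Fin m. Let a : Fin m → ℕ and for each orbit O set n_O = min { a(j) : j ∈ O }. Suppose N ∈ ℕ satisfies: for every function f assigning to each unordered pair of distinct elements of Fin N one of the orbits, there is an orbit O and an n_O-element set of vertices all of whose pairs are mapped by f to O. Then every m-edge-colouring of the complete graph on N vertices is Γ-switch equivalent to a colouring containing, for some i ∈ Fin m, a monochromatic K_{a(i)} of colour i. -/

import Mathlib

open scoped Classical in
/-- Switch the edge-colouring `c` at vertex `v` with permutation `π`: every edge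
incident with `v` has its colour replaced by its image under `π`. -/
noncomputable def switchAt {V K : Type*} (c : Sym2 V → K) (π : Equiv.Perm K) (v : V) :
    Sym2 V → K :=
  fun s => if v ∈ s then π (c s) else c s

/-- Two colourings are `Γ`-switch equivalent if one is obtained from the other by a
finite sequence of switches at vertices with permutations from `Γ`. -/
def SwitchEquiv {V K : Type*} (Γ : Subgroup (Equiv.Perm K)) (c c' : Sym2 V → K) : Prop :=
  Relation.ReflTransGen (fun d d' => ∃ π ∈ Γ, ∃ v : V, d' = switchAt d π v) c c'

/-- The colouring `c` contains a monochromatic complete graph on `t` vertices of colour `i`. -/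
def HasMonoK {V K : Type*} (c : Sym2 V → K) (i : K) (t : ℕ) : Prop :=
  ∃ S : Finset V, S.card = t ∧ ∀ x ∈ S, ∀ y ∈ S, x ≠ y → c s(x, y) = i


/-!
Switching at `u` by `h⁻¹`, at `v` by `g⁻¹`, at `u` by `h` and at `v` by `g` leaves every edge
except `uv` untouched and recolours `uv` by the commutator `⁅g, h⁆`. Hence each edge may be
recoloured independently within its `⁅Γ, Γ⁆`-orbit. Labelling every edge by the orbit of its colour,
the Ramsey hypothesis yields an orbit `O` and a set `S` of `n_O` vertices whose edges all have
colours in `O`; recolouring them all to a colour `j ∈ O` with `a j = n_O` gives a monochromatic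
`K_{a j}` of colour `j`.
-/

open scoped commutatorElement

section Switching

variable {V K : Type*} (Γ : Subgroup (Equiv.Perm K))

lemma switchEquiv_step {π : Equiv.Perm K} (hπ : π ∈ Γ) (v : V) (c : Sym2 V → K) :
    SwitchEquiv Γ c (switchAt c π v) :=
  Relation.ReflTransGen.single ⟨π, hπ, v, rfl⟩

omit Γ in
lemma switchAt_switchAt_inv (c : Sym2 V → K) (π : Equiv.Perm K) (v : V) :
    switchAt (switchAt c π v) π⁻¹ v = c := by
  funext s
  by_cases hv : v ∈ s <;> simp [switchAt, hv]

lemma SwitchEquiv.symm {c c' : Sym2 V → K} (h : SwitchEquiv Γ c c') : SwitchEquiv Γ c' c := by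
  induction h with
  | refl => exact Relation.ReflTransGen.refl
  | tail _ hstep ih =>
    obtain ⟨π, hπ, v, rfl⟩ := hstep
    exact ih.head ⟨π⁻¹, inv_mem hπ, v, (switchAt_switchAt_inv _ π v).symm⟩

variable [DecidableEq V]

lemma update_commutatorElement_eq_switchAt {u v : V} (huv : u ≠ v) (g h : Equiv.Perm K)
    (c : Sym2 V → K) :
    Function.update c s(u, v) (⁅g, h⁆ (c s(u, v))) =
      switchAt (switchAt (switchAt (switchAt c h⁻¹ u) g⁻¹ v) h u) g v := by
  funext s
  by_cases hs : s = s(u, v)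
  · subst hs
    simp [switchAt, commutatorElement_def]
  · have hnot_both : ¬ (u ∈ s ∧ v ∈ s) := fun huvs => hs ((Sym2.mem_and_mem_iff huv).mp huvs)
    by_cases hu : u ∈ s <;> by_cases hv : v ∈ s <;> simp_all [switchAt]

lemma switchEquiv_update_commutatorElement {u v : V} (huv : u ≠ v) {g h : Equiv.Perm K}
    (hg : g ∈ Γ) (hh : h ∈ Γ) (c : Sym2 V → K) :
    SwitchEquiv Γ c (Function.update c s(u, v) (⁅g, h⁆ (c s(u, v)))) := by
  rw [update_commutatorElement_eq_switchAt huv]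
  exact (((switchEquiv_step Γ (inv_mem hh) u c).tail ⟨g⁻¹, inv_mem hg, v, rfl⟩).tail
    ⟨h, hh, u, rfl⟩).tail ⟨g, hg, v, rfl⟩

lemma switchEquiv_update_of_mem_commutator {e : Sym2 V} (he : ¬ e.IsDiag) {σ : Equiv.Perm K}
    (hσ : σ ∈ ⁅Γ, Γ⁆) (c : Sym2 V → K) :
    SwitchEquiv Γ c (Function.update c e (σ (c e))) := by
  induction e using Sym2.ind with
  | _ u v =>
  have huv : u ≠ v := by simpa using he
  rw [Subgroup.commutator_def] at hσ
  induction hσ using Subgroup.closure_induction generalizing c with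
  | mem x hx =>
    obtain ⟨g, hg, h, hh, rfl⟩ := hx
    exact switchEquiv_update_commutatorElement Γ huv hg hh c
  | one =>
    rw [Equiv.Perm.one_apply, Function.update_eq_self]
    exact Relation.ReflTransGen.refl
  | mul σ τ _ _ ihσ ihτ =>
    have h : SwitchEquiv Γ c _ := (ihτ c).trans (ihσ _)
    simpa using h
  | inv σ _ ih =>
    have h := (ih (Function.update c s(u, v) (σ⁻¹ (c s(u, v))))).symm
    simpa using h

lemma switchEquiv_update_of_mem_orbit {e : Sym2 V} (he : ¬ e.IsDiag) {c : Sym2 V → K} {k : K}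
    (hk : k ∈ MulAction.orbit (↥⁅Γ, Γ⁆) (c e)) : SwitchEquiv Γ c (Function.update c e k) := by
  obtain ⟨σ, rfl⟩ := hk
  exact switchEquiv_update_of_mem_commutator Γ he σ.2 c

lemma switchEquiv_of_mem_orbit (T : Finset (Sym2 V)) {c d : Sym2 V → K}
    (hT : ∀ e ∈ T, ¬ e.IsDiag ∧ d e ∈ MulAction.orbit (↥⁅Γ, Γ⁆) (c e))
    (hout : ∀ e ∉ T, d e = c e) : SwitchEquiv Γ c d := by
  induction T using Finset.induction_on generalizing d with
  | empty => exact funext (fun e => hout e (Finset.notMem_empty e)) ▸ Relation.ReflTransGen.refl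
  | @insert e T heT ih =>
    obtain ⟨he, hde⟩ := hT e (Finset.mem_insert_self e T)
    set d' := Function.update d e (c e)
    have hcd' : SwitchEquiv Γ c d' := by
      refine ih (fun e' he' => ?_) (fun e' he' => ?_)
      · have hne : e' ≠ e := ne_of_mem_of_not_mem he' heT
        simpa [d', hne] using hT e' (Finset.mem_insert_of_mem he')
      · by_cases hee' : e' = e
        · simp [d', hee']
        · simpa [d', hee'] using hout e' (by simp [hee', he'])
    have hd : d = Function.update d' e (d e) := by simp [d']
    rw [hd]
    exact hcd'.trans (switchEquiv_update_of_mem_orbit Γ he (by simpa [d'] using hde))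

lemma exists_switchEquiv_hasMonoK {c : Sym2 V → K} {j : K} (S : Finset V)
    (hS : ∀ x ∈ S, ∀ y ∈ S, x ≠ y → j ∈ MulAction.orbit (↥⁅Γ, Γ⁆) (c s(x, y))) :
    ∃ c', SwitchEquiv Γ c c' ∧ HasMonoK c' j S.card := by
  set T := S.sym2.filter (fun e => ¬ e.IsDiag)
  refine ⟨fun e => if e ∈ T then j else c e, switchEquiv_of_mem_orbit Γ T ?_ ?_,
    S, rfl, fun x hx y hy hxy => by simp [T, hx, hy, hxy]⟩
  · intro e he
    induction e using Sym2.ind with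
    | _ x y =>
    have ⟨hxy, hx, hy⟩ : x ≠ y ∧ x ∈ S ∧ y ∈ S := by simpa [T, and_comm] using he
    exact ⟨by simpa using hxy, by simpa [he] using hS x hx y hy hxy⟩
  · intro e he
    simp [he]

end Switching

theorem stmt4_general (m : ℕ) (Γ : Subgroup (Equiv.Perm (Fin m)))
    (a : Fin m → ℕ) (N : ℕ)
    (hN : ∀ f : Sym2 (Fin N) → Set (Fin m),
      (∀ x y : Fin N, x ≠ y → ∃ i : Fin m, f s(x, y) = MulAction.orbit (↥⁅Γ, Γ⁆) i) →
      ∃ i : Fin m, ∃ S : Finset (Fin N),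
        S.card = sInf (a '' MulAction.orbit (↥⁅Γ, Γ⁆) i) ∧
        ∀ x ∈ S, ∀ y ∈ S, x ≠ y → f s(x, y) = MulAction.orbit (↥⁅Γ, Γ⁆) i)
    (c : Sym2 (Fin N) → Fin m) :
    ∃ c', SwitchEquiv Γ c c' ∧ ∃ i : Fin m, HasMonoK c' i (a i) := by
  obtain ⟨i, S, hcard, hS⟩ := hN (fun s => MulAction.orbit (↥⁅Γ, Γ⁆) (c s))
    (fun x y _ => ⟨c s(x, y), rfl⟩)
  obtain ⟨j, hji, hja⟩ :
      sInf (a '' MulAction.orbit (↥⁅Γ, Γ⁆) i) ∈ a '' MulAction.orbit (↥⁅Γ, Γ⁆) i :=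
    Nat.sInf_mem ⟨a i, i, MulAction.mem_orbit_self i, rfl⟩
  have hSj : ∀ x ∈ S, ∀ y ∈ S, x ≠ y → j ∈ MulAction.orbit (↥⁅Γ, Γ⁆) (c s(x, y)) :=
    fun x hx y hy hxy => by simpa [hS x hx y hy hxy] using hji
  obtain ⟨c', hcc', hmono⟩ := exists_switchEquiv_hasMonoK Γ S hSj
  exact ⟨c', hcc', j, by rwa [hja, ← hcard]⟩

/-- If `N` has the Ramsey property for labellings of edges by orbits of the action of
`⁅Γ,Γ⁆` on the colours (with target `n_O = min {a j : j ∈ O}` for each orbit `O`), then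
every `m`-edge-colouring of `K_N` is `Γ`-switch equivalent to one containing a
monochromatic `K_{a i}` of colour `i` for some `i`. -/
theorem stmt4 (m : ℕ) (hm : 2 ≤ m) (Γ : Subgroup (Equiv.Perm (Fin m)))
    (a : Fin m → ℕ) (N : ℕ)
    (hN : ∀ f : Sym2 (Fin N) → Set (Fin m),
      (∀ x y : Fin N, x ≠ y → ∃ i : Fin m, f s(x, y) = MulAction.orbit (↥⁅Γ, Γ⁆) i) →
      ∃ i : Fin m, ∃ S : Finset (Fin N),
        S.card = sInf (a '' MulAction.orbit (↥⁅Γ, Γ⁆) i) ∧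
        ∀ x ∈ S, ∀ y ∈ S, x ≠ y → f s(x, y) = MulAction.orbit (↥⁅Γ, Γ⁆) i)
    (c : Sym2 (Fin N) → Fin m) :
    ∃ c', SwitchEquiv Γ c c' ∧ ∃ i : Fin m, HasMonoK c' i (a i) :=
  stmt4_general m Γ a N hN c
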